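/- arXiv:2509.11172 — 5 statements merged into one kernel-verified Lean document; each statement's English description precedes it below -/
import Mathlib

section
/- Reconstruction lemma: a finite word u over a d-letter alphabet (d ≥ 2) is uniquely determined by its binary projections; that is, if u and v are finite words over alphabet A and for every pair of distinct letters i, j in A the projections π_{i,j}(u) and π_{i,j}(v) are equal, then u = v. -/
/-- Projection of a word onto the two-letter subalphabet `{i, j}`. -/
def proj2 {α : Type*} [DecidableEq α] (i j : α) (w : List α) : List α :=
  w.filter (fun c => decide (c = i ∨ c = j))

lemma proj2_cons {α : Type*} [DecidableEq α] (i j a : α) (w : List α) :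
    proj2 i j (a :: w) =
      if a = i ∨ a = j then a :: proj2 i j w else proj2 i j w := by
  simp only [proj2, List.filter_cons]
  by_cases hx : a = i ∨ a = j <;> simp [hx]

theorem stmt_8 {α : Type*} [DecidableEq α] [Nontrivial α] (u v : List α)
    (h : ∀ i j : α, i ≠ j → proj2 i j u = proj2 i j v) : u = v := by
  induction u generalizing v with
  | nil =>
    cases v with
    | nil => rfl
    | cons b v' =>
      obtain ⟨j, hj⟩ := exists_ne b
      have := h b j (Ne.symm hj)
      rw [proj2_cons] at this
      simp [proj2] at this
  | cons a u' ih =>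
    cases v with
    | nil =>
      obtain ⟨j, hj⟩ := exists_ne a
      have := h a j (Ne.symm hj)
      rw [proj2_cons] at this
      simp [proj2] at this
    | cons b v' =>
      have hab : a = b := by
        by_contra hne
        have := h a b hne
        rw [proj2_cons, proj2_cons] at this
        simp [hne, Ne.symm hne] at this
      subst hab
      have h' : ∀ i j : α, i ≠ j → proj2 i j u' = proj2 i j v' := by
        intro i j hij
        have := h i j hij
        rw [proj2_cons, proj2_cons] at this
        by_cases ha : a = i ∨ a = j
        · simp only [ha, if_true] at this
          exact List.tail_eq_of_cons_eq this
        · simpa [ha] using this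
      rw [ih v' h']
end

section
/- Let w be an infinite word over a d-letter alphabet (d ≥ 2) and k ≥ 1. If for every pair of distinct letters i, j, every two k-binomially equivalent factors of the projection π_{i,j}(w) are equal, then every two k-binomially equivalent factors of w are equal (i.e., the k-binomial complexity of w coincides with its subword complexity). -/
/-- Number of occurrences of `x` as a scattered subword of `w`. -/
def binom {α : Type*} [DecidableEq α] (w x : List α) : ℕ := w.sublists.count x

/-- `k`-binomial equivalence of finite words. -/
def KBinEquiv {α : Type*} [DecidableEq α] (k : ℕ) (u v : List α) : Prop :=
  ∀ x : List α, x.length ≤ k → binom u x = binom v x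

/-- `u` is a factor (finite contiguous subword) of the infinite word `w`. -/
def Factor {α : Type*} (w : ℕ → α) (u : List α) : Prop :=
  ∃ s : ℕ, u = (List.range u.length).map (fun t => w (s + t))

/-- `u` is a factor of the projection of the infinite word `w` onto `{i, j}`:
factors of the projection are exactly the projections of factors of `w`. -/
def FactorProj {α : Type*} [DecidableEq α] (w : ℕ → α) (i j : α) (u : List α) : Prop :=
  ∃ s n : ℕ,
    u = ((List.range n).map (fun t => w (s + t))).filter (fun c => decide (c = i ∨ c = j))

/-!
Projecting onto a pair of letters commutes with taking scattered subwords over that pair, and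
kills every scattered subword containing another letter. Hence projections of `k`-binomially
equivalent factors of `w` are `k`-binomially equivalent factors of `π_{i,j}(w)`, so by hypothesis
they are equal; and a word is determined by its projections onto all pairs of distinct letters.
-/

theorem List.sublists_filter {α : Type*} (p : α → Bool) (l : List α) :
    (l.filter p).sublists = l.sublists.filter (·.all p) := by
  induction l with
  | nil => rfl
  | cons a l ih =>
    rw [sublists_cons, filter_cons, bind_eq_flatMap]
    split_ifs <;> simp only [sublists_cons, bind_eq_flatMap, ih] <;> clear ih <;>
      induction l.sublists with
      | nil => rfl
      | cons s L ihL => cases hs : s.all p <;> simp_all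

section

variable {α : Type*} [DecidableEq α]

theorem binom_filter (p : α → Bool) (u x : List α) :
    binom (u.filter p) x = if x.all p then binom u x else 0 := by
  rw [binom, List.sublists_filter]
  split_ifs with hx
  · exact List.count_filter hx
  · exact List.count_eq_zero_of_not_mem fun hmem => hx (List.mem_filter.mp hmem).2

theorem KBinEquiv.filter {k : ℕ} {u v : List α} (h : KBinEquiv k u v) (p : α → Bool) :
    KBinEquiv k (u.filter p) (v.filter p) := fun x hx => by
  rw [binom_filter, binom_filter, h x hx]

/-- The projection `π_{i,j}` of a finite word. -/
def pairProj (i j : α) (u : List α) : List α :=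
  u.filter fun c => decide (c = i ∨ c = j)

theorem Factor.factorProj_pairProj {w : ℕ → α} {u : List α} (hu : Factor w u) (i j : α) :
    FactorProj w i j (pairProj i j u) := by
  obtain ⟨s, hs⟩ := hu
  exact ⟨s, u.length, by rw [← hs, pairProj]⟩

theorem pairProj_cons_ne_nil (i j : α) (u : List α) : pairProj i j (i :: u) ≠ [] := by
  simp [pairProj]

theorem eq_of_forall_pairProj_eq [Nontrivial α] {u v : List α}
    (h : ∀ i j : α, i ≠ j → pairProj i j u = pairProj i j v) : u = v := by
  induction u generalizing v with
  | nil =>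
    cases v with
    | nil => rfl
    | cons b v =>
      obtain ⟨j, hj⟩ := exists_ne b
      exact absurd (h b j hj.symm).symm (pairProj_cons_ne_nil b j v)
  | cons a u ih =>
    cases v with
    | nil =>
      obtain ⟨j, hj⟩ := exists_ne a
      exact absurd (h a j hj.symm) (pairProj_cons_ne_nil a j u)
    | cons b v =>
      obtain rfl : a = b := by
        by_contra hab
        simpa [pairProj, hab] using h a b hab
      refine congrArg (a :: ·) (ih fun i j hij => ?_)
      have hproj := h i j hij
      by_cases ha : a = i ∨ a = j <;> simpa [pairProj, List.filter_cons, ha] using hproj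

end

theorem stmt_11_general {α : Type*} [DecidableEq α] [Nontrivial α] (w : ℕ → α) (k : ℕ)
    (h : ∀ i j : α, i ≠ j → ∀ u v : List α,
      FactorProj w i j u → FactorProj w i j v → KBinEquiv k u v → u = v) :
    ∀ u v : List α, Factor w u → Factor w v → KBinEquiv k u v → u = v := by
  intro u v hu hv huv
  refine eq_of_forall_pairProj_eq fun i j hij => ?_
  exact h i j hij _ _ (hu.factorProj_pairProj i j) (hv.factorProj_pairProj i j) (huv.filter _)

theorem stmt_11 {α : Type*} [DecidableEq α] [Nontrivial α] (w : ℕ → α) (k : ℕ) (hk : 1 ≤ k)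
    (h : ∀ i j : α, i ≠ j → ∀ u v : List α,
      FactorProj w i j u → FactorProj w i j v → KBinEquiv k u v → u = v) :
    ∀ u v : List α, Factor w u → Factor w v → KBinEquiv k u v → u = v :=
  stmt_11_general w k h
end

section
/- If an infinite word w over an alphabet A is c-balanced, then for every pair of distinct letters i, j in A, the binary projection π_{i,j}(w) is c-balanced. -/
/-!
Write `u = π(w[s, s+n))` and `v = π(w[s', s'+n'))` with `n ≤ n'`. Extending the first window
to length `n'` only adds letters, so balancedness of `w` gives `|u|_k ≤ |v|_k + c` for both
letters `k = i, j`. Since `|u|_i + |u|_j = |u| = |v| = |v|_i + |v|_j`, the excess of `v` in one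
letter is the excess of `u` in the other, which bounds the difference by `c` in both directions.
-/

section Words

variable {α : Type*}

def window (w : ℕ → α) (s n : ℕ) : List α :=
  (List.range n).map (fun t => w (s + t))

@[simp]
lemma length_window (w : ℕ → α) (s n : ℕ) : (window w s n).length = n := by
  simp [window]

lemma factor_window (w : ℕ → α) (s n : ℕ) : Factor w (window w s n) :=
  ⟨s, by rw [length_window]; rfl⟩

lemma window_prefix (w : ℕ → α) (s : ℕ) {n n' : ℕ} (hn : n ≤ n') :
    window w s n <+: window w s n' := by
  have : window w s n = (window w s n').take n := by
    simp only [window, ← List.map_take, List.take_range, Nat.min_eq_left hn]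
  exact this ▸ List.take_prefix n _

variable [DecidableEq α]

/-- The projection `π_{i,j}` of the paper. -/
def proj (i j : α) (l : List α) : List α :=
  l.filter (fun c => decide (c = i ∨ c = j))

lemma length_proj {i j : α} (hij : i ≠ j) (l : List α) :
    (proj i j l).length = l.count i + l.count j := by
  induction l with
  | nil => rfl
  | cons a l ih =>
    simp only [proj, List.filter_cons, List.count_cons, beq_iff_eq] at ih ⊢
    by_cases hi : a = i <;> by_cases hj : a = j <;> simp_all <;> omega

lemma count_proj_of_mem {i j a : α} (ha : a = i ∨ a = j) (l : List α) :
    (proj i j l).count a = l.count a :=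
  List.count_filter (by simpa using ha)

lemma count_proj_of_not_mem {i j a : α} (ha : ¬(a = i ∨ a = j)) (l : List α) :
    (proj i j l).count a = 0 :=
  List.count_eq_zero_of_not_mem (by simp [proj, ha])

def IsBalanced (w : ℕ → α) (c : ℕ) : Prop :=
  ∀ u v : List α, Factor w u → Factor w v → u.length = v.length →
    ∀ a : α, |(u.count a : ℤ) - (v.count a : ℤ)| ≤ c

lemma IsBalanced.count_window_le {w : ℕ → α} {c : ℕ} (hw : IsBalanced w c)
    (s s' : ℕ) {n n' : ℕ} (hn : n ≤ n') (a : α) :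
    (window w s n).count a ≤ (window w s' n').count a + c := by
  have hpre := (window_prefix w s hn).count_le a
  have hbal := hw _ _ (factor_window w s n') (factor_window w s' n')
    (by simp only [length_window]) a
  rw [abs_le] at hbal
  omega

lemma IsBalanced.abs_count_proj_window_sub_le {w : ℕ → α} {c : ℕ}
    (hw : IsBalanced w c) {i j : α} (hij : i ≠ j) {s s' n n' : ℕ} (hn : n ≤ n')
    (hlen : (proj i j (window w s n)).length = (proj i j (window w s' n')).length) (a : α) :
    |((proj i j (window w s n)).count a : ℤ) - ((proj i j (window w s' n')).count a : ℤ)|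
      ≤ c := by
  by_cases ha : a = i ∨ a = j
  · rw [count_proj_of_mem ha, count_proj_of_mem ha]
    rw [length_proj hij, length_proj hij] at hlen
    have hi := hw.count_window_le s s' hn i
    have hj := hw.count_window_le s s' hn j
    rw [abs_le]
    rcases ha with rfl | rfl <;> omega
  · simp [count_proj_of_not_mem ha]

end Words

theorem stmt_12 {α : Type*} [DecidableEq α] (w : ℕ → α) (c : ℕ)
    (h : ∀ u v : List α, Factor w u → Factor w v → u.length = v.length →
      ∀ a : α, |(u.count a : ℤ) - (v.count a : ℤ)| ≤ c) :
    ∀ i j : α, i ≠ j → ∀ u v : List α,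
      FactorProj w i j u → FactorProj w i j v → u.length = v.length →
      ∀ a : α, |(u.count a : ℤ) - (v.count a : ℤ)| ≤ c := by
  have hw : IsBalanced w c := h
  rintro i j hij _ _ ⟨s, n, rfl⟩ ⟨s', n', rfl⟩ hlen a
  rcases le_total n n' with hn | hn
  · exact hw.abs_count_proj_window_sub_le hij hn hlen a
  · rw [abs_sub_comm]
    exact hw.abs_count_proj_window_sub_le hij hn hlen.symm a
end

section
/- Coloring substitution identity: let σ be a monoid morphism on words induced by a map between alphabets that sends each letter to a letter (a coding). Then for any finite word u and any word x over the target alphabet, the scattered-subword count binom(σ(u), x) equals the sum of binom(u, y) over all words y of length |x| with σ(y) = x. -/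
lemma count_indep {γ : Type*} [DecidableEq γ] [inst : BEq γ] [LawfulBEq γ]
    (l : List γ) (a : γ) :
    @List.count γ inst a l = @List.count γ instBEqOfDecidableEq a l := by
  rw [List.count_eq_countP]
  conv_rhs => rw [@List.count_eq_countP γ instBEqOfDecidableEq]
  apply List.countP_congr
  intro b _
  simp

theorem stmt_16 {α β : Type*} [DecidableEq α] [DecidableEq β]
    (σ : α → β) (u : List α) (x : List β) :
    binom (u.map σ) x
      = ∑ y ∈ u.sublists.toFinset.filter (fun y => y.length = x.length ∧ y.map σ = x),
          binom u y := by
  have hfilt : u.sublists.toFinset.filter (fun y => y.length = x.length ∧ y.map σ = x)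
      = u.sublists.toFinset.filter (fun y => y.map σ = x) := by
    refine Finset.filter_congr fun y _ => ?_
    constructor
    · exact fun h => h.2
    · intro h; exact ⟨by rw [← h, List.length_map], h⟩
  rw [hfilt]
  unfold binom
  rw [List.sublists_map, List.count_eq_countP, List.countP_map]
  have h2 : ∑ y ∈ u.sublists.toFinset.filter (fun y => y.map σ = x), u.sublists.count y
      = List.countP (fun y => decide (y.map σ = x)) u.sublists := by
    rw [Finset.sum_congr rfl (fun y _ => count_indep u.sublists y)]
    exact Finset.sum_filter_count_eq_countP _ _
  rw [h2]
  apply List.countP_congr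
  intro y _
  simp
end

section
/- Stability under coloring: let w0 be an infinite word over alphabet A and w1 an infinite word over alphabet B with A and B disjoint, let a ∈ A, and let w = color(w0, a, w1) be obtained from w0 by replacing the n-th occurrence of the letter a by the n-th letter of w1. If for some k ≥ 1 every two k-binomially equivalent factors of w0 are equal and every two k-binomially equivalent factors of w1 are equal, then every two k-binomially equivalent factors of w are equal. -/
/-- The coloring of the letter `a` in `w₀` by `w₁`: the `m`-th occurrence of `a`
in `w₀` is replaced by the `m`-th letter of `w₁`.  The disjoint union of the two
alphabets is modelled by the sum type `α ⊕ β`. -/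
def color {α β : Type*} [DecidableEq α] (w₀ : ℕ → α) (a : α) (w₁ : ℕ → β) : ℕ → α ⊕ β :=
  fun n =>
    if w₀ n = a then
      Sum.inr (w₁ (((Finset.range (n + 1)).filter (fun m => w₀ m = a)).card - 1))
    else
      Sum.inl (w₀ n)

/-!
A factor `u` of `color w₀ a w₁` is determined by its image under the coding `σ` that sends
the letters of `β` back to `a` and by its projection `π` onto `β`: the letter `a` itself never
occurs in `u`, so `σ` records where the letters of `β` sit and `π` records which letters they are.
Both `σ u` and `π u` are factors of `w₀` and `w₁` respectively, and both maps preserve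
`k`-binomial equivalence, since `σ` is a letter-to-letter morphism and a subword of `π u`
is counted in `π u` exactly as often as its copy in `β`-letters is counted in `u`.
-/

namespace List

theorem countP_sublists_eq_of_kBinEquiv {γ : Type*} [DecidableEq γ] {k : ℕ} {u v : List γ}
    (h : KBinEquiv k u v) (p : List γ → Bool) (hp : ∀ y, p y → y.length ≤ k) :
    u.sublists.countP p = v.sublists.countP p := by
  rw [countP_eq_length_filter, countP_eq_length_filter]
  refine Perm.length_eq (perm_iff_count.2 fun y => ?_)
  by_cases hy : p y
  · rw [count_filter hy, count_filter hy]
    exact h y (hp y hy)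
  · rw [count_eq_zero.2 fun hm => hy (mem_filter.1 hm).2,
      count_eq_zero.2 fun hm => hy (mem_filter.1 hm).2]

end List

section Binom

theorem binom_map {α γ : Type*} [DecidableEq γ] (f : α → γ) (u : List α) (x : List γ) :
    binom (u.map f) x = u.sublists.countP (fun y => y.map f == x) := by
  rw [binom, List.sublists_map, List.count, List.countP_map]
  rfl

variable {α β γ : Type*} [DecidableEq α] [DecidableEq β] [DecidableEq γ]

theorem KBinEquiv.map {k : ℕ} {u v : List α} (f : α → γ) (h : KBinEquiv k u v) :
    KBinEquiv k (u.map f) (v.map f) := by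
  intro x hx
  rw [binom_map, binom_map]
  refine List.countP_sublists_eq_of_kBinEquiv h _ fun y hy => ?_
  rw [← beq_iff_eq.1 hy, List.length_map] at hx
  exact hx

theorem binom_eq_count_sublists' (u x : List α) : binom u x = u.sublists'.count x :=
  (List.sublists_perm_sublists' u).count_eq x

theorem binom_cons_nil (c : α) (l : List α) : binom (c :: l) [] = binom l [] := by
  rw [binom_eq_count_sublists', binom_eq_count_sublists', List.sublists'_cons,
    List.count_append, add_eq_left, List.count_eq_zero]
  simp

theorem binom_cons_cons (c d : α) (l t : List α) :
    binom (c :: l) (d :: t) = binom l (d :: t) + if c = d then binom l t else 0 := by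
  rw [binom_eq_count_sublists', binom_eq_count_sublists', List.sublists'_cons,
    List.count_append]
  congr 1
  split_ifs with hcd
  · rw [hcd, binom_eq_count_sublists', List.count, List.count, List.countP_map]
    exact List.countP_congr fun y _ => by simp
  · exact List.count_eq_zero.2 (by simp [hcd])

theorem binom_filterMap_getRight (l : List (α ⊕ β)) (x : List β) :
    binom (l.filterMap Sum.getRight?) x = binom l (x.map Sum.inr) := by
  induction l generalizing x with
  | nil => cases x <;> rfl
  | cons c l ih =>
    cases c with
    | inl c =>
      cases x with
      | nil => simpa [binom_cons_nil, List.filterMap_cons] using ih []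
      | cons d t => simpa [binom_cons_cons, List.filterMap_cons] using ih (d :: t)
    | inr c =>
      cases x with
      | nil => simpa [binom_cons_nil] using ih []
      | cons d t => simp [binom_cons_cons, ih]

theorem KBinEquiv.filterMap_getRight {k : ℕ} {u v : List (α ⊕ β)} (h : KBinEquiv k u v) :
    KBinEquiv k (u.filterMap Sum.getRight?) (v.filterMap Sum.getRight?) := by
  intro x hx
  rw [binom_filterMap_getRight, binom_filterMap_getRight]
  exact h _ (by simpa using hx)

end Binom

theorem List.eq_of_map_elim_eq_of_filterMap_getRight_eq {α β : Type*} {a : α}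
    {u v : List (α ⊕ β)} (hu : Sum.inl a ∉ u) (hv : Sum.inl a ∉ v)
    (hσ : u.map (Sum.elim id fun _ => a) = v.map (Sum.elim id fun _ => a))
    (hπ : u.filterMap Sum.getRight? = v.filterMap Sum.getRight?) : u = v := by
  induction u generalizing v with
  | nil => cases v <;> simp_all
  | cons c u ih =>
    cases v with
    | nil => simp at hσ
    | cons d v =>
      simp only [mem_cons, not_or, map_cons, cons.injEq] at hu hv hσ
      rcases c with c | c <;> rcases d with d | d
      · simp only [filterMap_cons, Sum.getRight?_inl] at hπ
        simp only [Sum.elim_inl, id] at hσ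
        rw [hσ.1, ih hu.2 hv.2 hσ.2 hπ]
      · exact absurd (by simpa using hσ.1.symm) hu.1
      · exact absurd (by simpa using hσ.1) hv.1
      · simp only [filterMap_cons, Sum.getRight?_inr, cons.injEq] at hπ
        rw [hπ.1, ih hu.2 hv.2 hσ.2 hπ.2]

theorem Factor.map {α γ : Type*} {w : ℕ → α} {u : List α} (f : α → γ) (h : Factor w u) :
    Factor (f ∘ w) (u.map f) := by
  obtain ⟨s, hs⟩ := h
  refine ⟨s, ?_⟩
  rw [List.length_map]
  nth_rewrite 1 [hs]
  simp [Function.comp_def]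

theorem Factor.exists_eq_of_mem {α : Type*} {w : ℕ → α} {u : List α} (h : Factor w u)
    {x : α} (hx : x ∈ u) : ∃ n, w n = x := by
  obtain ⟨s, hs⟩ := h
  rw [hs] at hx
  obtain ⟨t, -, rfl⟩ := List.mem_map.1 hx
  exact ⟨s + t, rfl⟩

section Color

variable {α β : Type*} [DecidableEq α] (w₀ : ℕ → α) (a : α) (w₁ : ℕ → β)

theorem color_of_eq {n : ℕ} (h : w₀ n = a) :
    color w₀ a w₁ n = Sum.inr (w₁ (Nat.count (w₀ · = a) n)) := by
  rw [color, if_pos h, ← Nat.count_eq_card_filter_range, Nat.count_succ, if_pos h,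
    Nat.add_sub_cancel]

theorem color_of_ne {n : ℕ} (h : w₀ n ≠ a) : color w₀ a w₁ n = Sum.inl (w₀ n) :=
  if_neg h

theorem elim_comp_color : (Sum.elim id fun _ => a) ∘ color w₀ a w₁ = w₀ := by
  funext n
  by_cases h : w₀ n = a
  · simp [color_of_eq w₀ a w₁ h, h]
  · simp [color_of_ne w₀ a w₁ h]

theorem color_ne_inl (n : ℕ) : color w₀ a w₁ n ≠ Sum.inl a := by
  by_cases h : w₀ n = a
  · simp [color_of_eq w₀ a w₁ h]
  · simpa [color_of_ne w₀ a w₁ h] using h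

theorem filterMap_getRight_color_segment (s n : ℕ) :
    ((List.range n).map fun t => color w₀ a w₁ (s + t)).filterMap Sum.getRight? =
      (List.range (Nat.count (w₀ · = a) (s + n) - Nat.count (w₀ · = a) s)).map
        fun t => w₁ (Nat.count (w₀ · = a) s + t) := by
  induction n with
  | zero => simp
  | succ n ih =>
    have hmono := Nat.count_monotone (w₀ · = a) (Nat.le_add_right s n)
    rw [List.range_succ, List.map_append, List.filterMap_append, ih, ← add_assoc,
      Nat.count_succ]
    by_cases h : w₀ (s + n) = a
    · rw [if_pos h, Nat.sub_add_comm hmono, List.range_succ, List.map_append]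
      simp [color_of_eq w₀ a w₁ h, Nat.add_sub_cancel' hmono]
    · simp [color_of_ne w₀ a w₁ h, h]

variable {w₀ a w₁}

theorem Factor.map_elim_of_color {u : List (α ⊕ β)} (h : Factor (color w₀ a w₁) u) :
    Factor w₀ (u.map (Sum.elim id fun _ => a)) :=
  elim_comp_color w₀ a w₁ ▸ h.map _

theorem Factor.inl_notMem_of_color {u : List (α ⊕ β)} (h : Factor (color w₀ a w₁) u) :
    Sum.inl a ∉ u := fun hmem => by
  obtain ⟨n, hn⟩ := h.exists_eq_of_mem hmem
  exact color_ne_inl w₀ a w₁ n hn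

theorem Factor.filterMap_getRight_of_color {u : List (α ⊕ β)}
    (h : Factor (color w₀ a w₁) u) : Factor w₁ (u.filterMap Sum.getRight?) := by
  obtain ⟨s, hs⟩ := h
  refine ⟨Nat.count (w₀ · = a) s, ?_⟩
  rw [hs, filterMap_getRight_color_segment, List.length_map, List.length_range]

end Color

theorem stmt_19_general {α β : Type*} [DecidableEq α] [DecidableEq β]
    (w₀ : ℕ → α) (w₁ : ℕ → β) (a : α) (k : ℕ)
    (h₀ : ∀ u v : List α, Factor w₀ u → Factor w₀ v → KBinEquiv k u v → u = v)
    (h₁ : ∀ u v : List β, Factor w₁ u → Factor w₁ v → KBinEquiv k u v → u = v) :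
    ∀ u v : List (α ⊕ β), Factor (color w₀ a w₁) u → Factor (color w₀ a w₁) v →
      KBinEquiv k u v → u = v := by
  intro u v hu hv huv
  exact List.eq_of_map_elim_eq_of_filterMap_getRight_eq
    hu.inl_notMem_of_color hv.inl_notMem_of_color
    (h₀ _ _ hu.map_elim_of_color hv.map_elim_of_color (huv.map _))
    (h₁ _ _ hu.filterMap_getRight_of_color hv.filterMap_getRight_of_color
      huv.filterMap_getRight)

theorem stmt_19 {α β : Type*} [DecidableEq α] [DecidableEq β]
    (w₀ : ℕ → α) (w₁ : ℕ → β) (a : α) (k : ℕ) (hk : 1 ≤ k)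
    (h₀ : ∀ u v : List α, Factor w₀ u → Factor w₀ v → KBinEquiv k u v → u = v)
    (h₁ : ∀ u v : List β, Factor w₁ u → Factor w₁ v → KBinEquiv k u v → u = v) :
    ∀ u v : List (α ⊕ β), Factor (color w₀ a w₁) u → Factor (color w₀ a w₁) v →
      KBinEquiv k u v → u = v :=
  stmt_19_general w₀ w₁ a k h₀ h₁
end
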